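/- arXiv:1903.08278 — 3 statements merged into one kernel-verified Lean document; each statement's English description precedes it below -/
import Mathlib

section
/- There are, up to equivalence, exactly 2 Gram matrices of icosahedra whose automorphism group is all of A (the regular icosahedron and its Galois conjugate, the great icosahedron). -/
open Matrix

noncomputable section

namespace Ico

/-- The permutation `a = (1,2)(3,4)(5,7)(6,8)(9,11)(10,12)` (vertices labelled `0,…,11`). -/
def a : Equiv.Perm (Fin 12) :=
  Equiv.swap 0 1 * Equiv.swap 2 3 * Equiv.swap 4 6 * Equiv.swap 5 7 *
    Equiv.swap 8 10 * Equiv.swap 9 11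

/-- The permutation `b = (1,10)(2,12)(3,9)(4,11)(5,6)(7,8)`. -/
def b : Equiv.Perm (Fin 12) :=
  Equiv.swap 0 9 * Equiv.swap 1 11 * Equiv.swap 2 8 * Equiv.swap 3 10 *
    Equiv.swap 4 5 * Equiv.swap 6 7

/-- The permutation `c = (1,7)(2,3)(4,11)(5,12)(6,8)(9,10)`. -/
def c : Equiv.Perm (Fin 12) :=
  Equiv.swap 0 6 * Equiv.swap 1 2 * Equiv.swap 3 10 * Equiv.swap 4 11 *
    Equiv.swap 5 7 * Equiv.swap 8 9

/-- The central permutation `d = (1,12)(2,10)(3,9)(4,11)(5,7)(6,8)`. -/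
def d : Equiv.Perm (Fin 12) :=
  Equiv.swap 0 11 * Equiv.swap 1 9 * Equiv.swap 2 8 * Equiv.swap 3 10 *
    Equiv.swap 4 6 * Equiv.swap 5 7

/-- The combinatorial automorphism group `A = ⟨a,b,c,d⟩ ≅ C₂ × A₅` of the icosahedron. -/
def A : Subgroup (Equiv.Perm (Fin 12)) := Subgroup.closure {a, b, c, d}

/-- `{i,j}` is an edge iff it lies in the `A`-orbit of the set `{1,2}`. -/
def IsEdge (i j : Fin 12) : Prop :=
  ∃ g ∈ A, ({g 0, g 1} : Finset (Fin 12)) = {i, j}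

/-- The `i`-th column of a `3 × 12` matrix, as a point of Euclidean 3-space. -/
def col (M : Matrix (Fin 3) (Fin 12) ℝ) (i : Fin 12) : EuclideanSpace ℝ (Fin 3) :=
  WithLp.toLp 2 (fun k => M k i)

/-- An icosahedron: pairwise distinct vertices, centre of mass `0`, all edges of length `1`. -/
def IsIcosahedron (M : Matrix (Fin 3) (Fin 12) ℝ) : Prop :=
  Function.Injective (col M) ∧ (∑ i, col M i) = 0 ∧
    ∀ i j, IsEdge i j → ‖col M i - col M j‖ = 1

/-- The Gram matrix `MᵀM` of a coordinate matrix. -/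
def gram (M : Matrix (Fin 3) (Fin 12) ℝ) : Matrix (Fin 12) (Fin 12) ℝ := Mᵀ * M

/-- `G` is the Gram matrix of some icosahedron. -/
def IsGram (G : Matrix (Fin 12) (Fin 12) ℝ) : Prop :=
  ∃ M, IsIcosahedron M ∧ G = gram M

/-- The permutation matrix `π(g)`; `M * permMat g` has `V_{g(i)}` as its `i`-th column. -/
def permMat (g : Equiv.Perm (Fin 12)) : Matrix (Fin 12) (Fin 12) ℝ :=
  Matrix.of fun i j => if i = g j then 1 else 0

/-- The action `G ↦ π(g)ᵀ G π(g)` of a permutation on Gram matrices,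
`(conj g G)_{i,j} = G_{g(i),g(j)}`. -/
def conj (g : Equiv.Perm (Fin 12)) (G : Matrix (Fin 12) (Fin 12) ℝ) :
    Matrix (Fin 12) (Fin 12) ℝ :=
  (permMat g)ᵀ * G * permMat g

/-- Equivalence of Gram matrices: conjugacy by a permutation matrix coming from `A`. -/
def GramEquiv (G G' : Matrix (Fin 12) (Fin 12) ℝ) : Prop :=
  ∃ g ∈ A, G' = conj g G

/-- The automorphism group of a Gram matrix: its stabilizer in `A`. -/
def aut (G : Matrix (Fin 12) (Fin 12) ℝ) : Set (Equiv.Perm (Fin 12)) :=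
  {g | g ∈ A ∧ conj g G = G}

/-!
An `A`-invariant Gram matrix is constant on the orbits of `A` on ordered pairs of vertices, which
are the four distance classes, so `G = ofDist w` for some weight `w : Fin 4 → ℝ`. All matrices
`ofDist w` have the same eigenvectors: the all-ones vector, two three-dimensional eigenspaces
(spanned by the rows of `coord √5` and of `coord (-√5)`) and a five-dimensional one, with
eigenvalues `w ⬝ᵥ ![1, 5, 5, 1]`, `w ⬝ᵥ ![1, ±√5, ∓√5, -1]` and `w ⬝ᵥ ![1, -1, -1, 1]`.
Since `G = MᵀM` has rank at most three, the five-dimensional eigenvalue and one of the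
three-dimensional ones vanish; the centre of mass kills the first eigenvalue, and the edge length
fixes the scale. What remains are the two Galois conjugate solutions `icoGram (±√5)`.
-/

theorem card_le_of_mul_eq_diagonal {K ι κ : Type*} [Field K] [Fintype ι] [DecidableEq ι]
    [Fintype κ] (X : Matrix ι κ K) (Y : Matrix κ ι K) {d : ι → K} (hd : ∀ i, d i ≠ 0)
    (h : X * Y = diagonal d) : Fintype.card ι ≤ Fintype.card κ :=
  calc Fintype.card ι = (X * Y).rank := by
        rw [h, rank_of_isUnit _ (isUnit_diagonal.mpr (Pi.isUnit_iff.mpr fun i => (hd i).isUnit))]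
    _ ≤ X.rank := rank_mul_le_left X Y
    _ ≤ Fintype.card κ := rank_le_card_width X

theorem card_le_of_orthogonal_eigenvectors {K ι κ n : Type*} [Field K] [Fintype ι]
    [DecidableEq ι] [Fintype κ] [Fintype n] {M : Matrix κ n K} {U : Matrix ι n K}
    {lam N : ι → K} (hU : U * (Mᵀ * M) = diagonal lam * U) (hUU : U * Uᵀ = diagonal N)
    (hlam : ∀ i, lam i ≠ 0) (hN : ∀ i, N i ≠ 0) : Fintype.card ι ≤ Fintype.card κ := by
  refine card_le_of_mul_eq_diagonal (U * Mᵀ) (M * Uᵀ) (fun i => mul_ne_zero (hlam i) (hN i)) ?_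
  calc U * Mᵀ * (M * Uᵀ) = U * (Mᵀ * M) * Uᵀ := by simp only [Matrix.mul_assoc]
    _ = diagonal (lam * N) := by
      rw [hU, Matrix.mul_assoc, hUU, diagonal_mul_diagonal]; rfl

def toReal {m n : Type*} (X : Matrix m n ℤ) : Matrix m n ℝ := X.map Int.cast

theorem toReal_mul {l m n : Type*} [Fintype m] (X : Matrix l m ℤ) (Y : Matrix m n ℤ) :
    toReal (X * Y) = toReal X * toReal Y :=
  Matrix.map_mul (f := Int.castRingHom ℝ)

theorem toReal_transpose {m n : Type*} (X : Matrix m n ℤ) : toReal Xᵀ = (toReal X)ᵀ := rfl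

/-- Graph distance in the icosahedron; its level sets are the orbits of `A` on ordered pairs. -/
def icoDist : Fin 12 → Fin 12 → Fin 4 :=
  ![![0, 1, 1, 1, 1, 1, 2, 2, 2, 2, 2, 3], ![1, 0, 1, 1, 2, 2, 1, 1, 2, 3, 2, 2],
    ![1, 1, 0, 2, 2, 1, 1, 2, 3, 2, 1, 2], ![1, 1, 2, 0, 1, 2, 2, 1, 1, 2, 3, 2],
    ![1, 2, 2, 1, 0, 1, 3, 2, 1, 1, 2, 2], ![1, 2, 1, 2, 1, 0, 2, 3, 2, 1, 1, 2],
    ![2, 1, 1, 2, 3, 2, 0, 1, 2, 2, 1, 1], ![2, 1, 2, 1, 2, 3, 1, 0, 1, 2, 2, 1],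
    ![2, 2, 3, 1, 1, 2, 2, 1, 0, 1, 2, 1], ![2, 3, 2, 2, 1, 1, 2, 2, 1, 0, 1, 1],
    ![2, 2, 1, 3, 2, 1, 1, 2, 2, 1, 0, 1], ![3, 2, 2, 2, 2, 2, 1, 1, 1, 1, 1, 0]]

theorem icoDist_self : ∀ i, icoDist i i = 0 := by decide

theorem icoDist_comm : ∀ i j, icoDist i j = icoDist j i := by decide

theorem eq_of_icoDist_eq_zero : ∀ i j, icoDist i j = 0 → i = j := by decide

theorem icoDist_apply_apply {g : Equiv.Perm (Fin 12)} (hg : g ∈ A) (i j : Fin 12) :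
    icoDist (g i) (g j) = icoDist i j := by
  induction hg using Subgroup.closure_induction generalizing i j with
  | mem x hx =>
    simp only [Set.mem_insert_iff, Set.mem_singleton_iff] at hx
    rcases hx with rfl | rfl | rfl | rfl <;> revert i j <;> decide
  | one => rfl
  | mul x y _ _ hx hy => simp only [Equiv.Perm.mul_apply, hx, hy]
  | inv x _ hx => simpa using (hx (x⁻¹ i) (x⁻¹ j)).symm

theorem icoDist_eq_one_of_isEdge {i j : Fin 12} (h : IsEdge i j) : icoDist i j = 1 := by
  obtain ⟨g, hg, hij⟩ := h
  have hij' : ({g 0, g 1} : Set (Fin 12)) = {i, j} := by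
    simpa using congrArg (fun s : Finset (Fin 12) => (s : Set (Fin 12))) hij
  rcases Set.pair_eq_pair_iff.mp hij' with ⟨rfl, rfl⟩ | ⟨rfl, rfl⟩
  · rw [icoDist_apply_apply hg]; rfl
  · rw [icoDist_comm, icoDist_apply_apply hg]; rfl

theorem isEdge_zero_one : IsEdge 0 1 := ⟨1, one_mem A, rfl⟩

def generator : Fin 4 → Equiv.Perm (Fin 12) := ![a, b, c, d]

def word (l : List (Fin 4)) : Equiv.Perm (Fin 12) := (l.map generator).prod

theorem word_mem (l : List (Fin 4)) : word l ∈ A := by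
  refine A.list_prod_mem fun g hg => ?_
  obtain ⟨k, -, rfl⟩ := List.mem_map.mp hg
  exact Subgroup.subset_closure (by fin_cases k <;> simp [generator])

def vertexRep : Fin 4 → Fin 12 := ![0, 1, 6, 11]

def wordToVertex : Fin 12 → List (Fin 4) :=
  ![[], [0], [2, 0], [0, 2, 0], [0, 2], [0, 1, 2], [2], [1, 2], [2, 1], [1], [0, 2, 1], [3]]

/-- `word (wordFixingZero y)` fixes `0` and maps `vertexRep (icoDist 0 y)` to `y`. -/
def wordFixingZero : Fin 12 → List (Fin 4) :=
  ![[], [], [0, 1, 2, 0, 2], [2, 0, 2, 3], [1, 2, 1, 2, 0], [0, 2, 1, 2, 1], [], [0, 1, 3],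
    [2, 0, 2, 3], [0, 2, 1, 2, 1], [0, 1, 2, 0, 2], []]

theorem word_wordToVertex_zero : ∀ x, word (wordToVertex x) 0 = x := by decide

set_option maxRecDepth 4000 in
theorem word_wordFixingZero :
    ∀ y, word (wordFixingZero y) 0 = 0 ∧ word (wordFixingZero y) (vertexRep (icoDist 0 y)) = y := by
  decide

theorem exists_mem_A_apply_zero_apply_vertexRep (x y : Fin 12) :
    ∃ g ∈ A, g 0 = x ∧ g (vertexRep (icoDist x y)) = y := by
  set g := word (wordToVertex x)
  set h := word (wordFixingZero (g⁻¹ y))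
  have hdist : icoDist x y = icoDist 0 (g⁻¹ y) := by
    simpa [g, word_wordToVertex_zero] using icoDist_apply_apply (word_mem (wordToVertex x)) 0 (g⁻¹ y)
  refine ⟨g * h, mul_mem (word_mem _) (word_mem _), ?_, ?_⟩
  · simp [h, (word_wordFixingZero _).1, g, word_wordToVertex_zero]
  · simp [hdist, h, (word_wordFixingZero _).2]

def ofDist {R : Type*} (w : Fin 4 → R) : Matrix (Fin 12) (Fin 12) R :=
  of fun i j => w (icoDist i j)

theorem conj_apply (g : Equiv.Perm (Fin 12)) (G : Matrix (Fin 12) (Fin 12) ℝ) (i j : Fin 12) :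
    conj g G i j = G (g i) (g j) := by
  simp [conj, permMat, mul_apply, mul_ite, ite_mul, Finset.sum_ite_eq']

theorem aut_ofDist (w : Fin 4 → ℝ) : aut (ofDist w) = A := by
  ext g
  refine ⟨And.left, fun hg => ⟨hg, ?_⟩⟩
  ext i j
  simp [conj_apply, ofDist, icoDist_apply_apply hg]

theorem conj_eq_of_aut_eq {G : Matrix (Fin 12) (Fin 12) ℝ} (hG : aut G = A)
    {g : Equiv.Perm (Fin 12)} (hg : g ∈ A) : conj g G = G :=
  (show g ∈ aut G by rw [hG]; exact hg).2

theorem gramEquiv_iff_eq {G G' : Matrix (Fin 12) (Fin 12) ℝ} (hG : aut G = A) :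
    GramEquiv G G' ↔ G' = G := by
  refine ⟨fun ⟨g, hg, h⟩ => h ▸ conj_eq_of_aut_eq hG hg, fun h => ⟨1, one_mem A, ?_⟩⟩
  ext i j
  simp [h, conj_apply]

theorem eq_ofDist_of_aut_eq {G : Matrix (Fin 12) (Fin 12) ℝ} (hG : aut G = A) :
    G = ofDist fun m => G 0 (vertexRep m) := by
  ext x y
  obtain ⟨g, hg, h0, hy⟩ := exists_mem_A_apply_zero_apply_vertexRep x y
  calc G x y = G (g 0) (g (vertexRep (icoDist x y))) := by rw [h0, hy]
    _ = G 0 (vertexRep (icoDist x y)) := by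
        rw [← conj_apply g G, conj_eq_of_aut_eq hG hg]

section

variable {M : Matrix (Fin 3) (Fin 12) ℝ} {w : Fin 4 → ℝ}

theorem inner_col (i j : Fin 12) :
    inner ℝ (col M i) (col M j) = gram M i j := by
  simp [col, gram, mul_apply, PiLp.inner_apply, mul_comm]

theorem norm_col_sub_col_sq (hM : gram M = ofDist w) (i j : Fin 12) :
    ‖col M i - col M j‖ ^ 2 = 2 * (w 0 - w (icoDist i j)) := by
  rw [norm_sub_sq_real, ← real_inner_self_eq_norm_sq, ← real_inner_self_eq_norm_sq, inner_col,
    inner_col, inner_col, hM]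
  simp only [ofDist, of_apply, icoDist_self]
  ring

theorem sum_gram_eq_zero (hM : ∑ i, col M i = 0) (i : Fin 12) :
    ∑ j, gram M i j = 0 := by
  simp_rw [← inner_col, ← inner_sum, hM, inner_zero_right]

theorem sum_ofDist_zero : ∑ j, ofDist w 0 j = w ⬝ᵥ ![1, 5, 5, 1] := by
  simp [ofDist, icoDist, Fin.sum_univ_succ, dotProduct]
  ring

def distMat (m : Fin 4) : Matrix (Fin 12) (Fin 12) ℤ :=
  ofDist fun k => if k = m then 1 else 0

theorem ofDist_eq_sum : ofDist w = ∑ m, w m • toReal (distMat m) := by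
  ext i j
  simp [ofDist, distMat, toReal, Matrix.sum_apply]

theorem mul_ofDist {ι : Type*} {U : Matrix ι (Fin 12) ℝ} {θ : Fin 4 → ℝ}
    (hU : ∀ m, U * toReal (distMat m) = θ m • U) :
    U * ofDist w = (w ⬝ᵥ θ) • U := by
  simp [ofDist_eq_sum, Matrix.mul_sum, hU, smul_smul, dotProduct, Finset.sum_smul]

def coord₀ : Matrix (Fin 3) (Fin 12) ℤ :=
  !![0, 2, 1, -2, -1, 0, 1, 0, -1, -2, 2, 0;
     2, 1, 0, 1, 0, -2, 0, 2, 0, -1, -1, -2;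
     1, 0, 2, 0, 2, 1, -2, -1, -2, 0, 0, -1]

def coord₁ : Matrix (Fin 3) (Fin 12) ℤ :=
  !![0, 0, 1, 0, -1, 0, 1, 0, -1, 0, 0, 0;
     0, 1, 0, 1, 0, 0, 0, 0, 0, -1, -1, 0;
     1, 0, 0, 0, 0, 1, 0, -1, 0, 0, 0, -1]

/-- For `t = ±√5`, the columns are the cyclic permutations of `(0, ±2, ±(1 + t))`: four times
the vertices of the regular (`t = √5`) or the great (`t = -√5`) icosahedron. -/
def coord (t : ℝ) : Matrix (Fin 3) (Fin 12) ℝ := toReal coord₀ + t • toReal coord₁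

theorem coord₀_mul_distMat :
    ∀ m, coord₀ * distMat m = ![1, 0, 0, -1] m • coord₀ + ![0, 5, -5, 0] m • coord₁ := by
  decide

theorem coord₁_mul_distMat :
    ∀ m, coord₁ * distMat m = ![0, 1, -1, 0] m • coord₀ + ![1, 0, 0, -1] m • coord₁ := by
  decide

theorem coord_mul_distMat {t : ℝ} (ht : t * t = 5) (m : Fin 4) :
    coord t * toReal (distMat m) = ![1, t, -t, -1] m • coord t := by
  rw [coord, Matrix.add_mul, Matrix.smul_mul, ← toReal_mul, ← toReal_mul,
    coord₀_mul_distMat, coord₁_mul_distMat]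
  ext k j
  linear_combination (norm := skip) (-![0, 1, -1, 0] m * (coord₁ k j : ℝ)) * ht
  fin_cases m <;> simp [toReal] <;> ring

theorem coord₀_coord₁_mul_transpose :
    coord₀ * coord₀ᵀ = 20 ∧ coord₀ * coord₁ᵀ = 4 ∧ coord₁ * coord₀ᵀ = 4 ∧ coord₁ * coord₁ᵀ = 4 := by
  decide

theorem coord_mul_transpose_coord (s t : ℝ) :
    coord s * (coord t)ᵀ = (20 + 4 * (s + t) + 4 * (s * t)) • 1 := by
  obtain ⟨h₀₀, h₀₁, h₁₀, h₁₁⟩ := coord₀_coord₁_mul_transpose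
  simp only [coord, transpose_add, transpose_smul, ← toReal_transpose, Matrix.add_mul,
    Matrix.mul_add, Matrix.smul_mul, Matrix.mul_smul, ← toReal_mul, h₀₀, h₀₁, h₁₀, h₁₁]
  ext i j
  by_cases hij : i = j <;> simp [toReal, one_apply, ofNat_apply, hij]
  ring

theorem coord_mul_transpose_coord_self {t : ℝ} (ht : t * t = 5) :
    coord t * (coord t)ᵀ = diagonal fun _ => 40 + 8 * t := by
  rw [coord_mul_transpose_coord, smul_one_eq_diagonal]
  congr 1
  ext
  linear_combination 4 * ht

theorem coord_mul_transpose_coord_neg {t : ℝ} (ht : t * t = 5) : coord t * (coord (-t))ᵀ = 0 := by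
  rw [coord_mul_transpose_coord, show 20 + 4 * (t + -t) + 4 * (t * -t) = 0 by
    linear_combination -4 * ht, zero_smul]

/-- Four orthogonal vectors in the five-dimensional common eigenspace of the `distMat m`. -/
def eigenFive : Matrix (Fin 4) (Fin 12) ℤ :=
  !![-1, 1, 0, 0, 0, 0, 0, 0, 0, 1, 0, -1;
     -1, -1, 2, 0, 0, 0, 0, 0, 2, -1, 0, -1;
     -1, -1, -1, 3, 0, 0, 0, 0, -1, -1, 3, -1;
     -1, -1, -1, -1, 4, 0, 4, 0, -1, -1, -1, -1]

theorem eigenFive_mul_distMat : ∀ m, eigenFive * distMat m = ![1, -1, -1, 1] m • eigenFive := by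
  decide

theorem eigenFive_mul_transpose : eigenFive * eigenFiveᵀ = diagonal ![4, 12, 24, 40] := by
  decide

theorem toReal_eigenFive_mul_distMat (m : Fin 4) :
    toReal eigenFive * toReal (distMat m) = (![1, -1, -1, 1] : Fin 4 → ℝ) m • toReal eigenFive := by
  rw [← toReal_mul, eigenFive_mul_distMat]
  ext i j
  fin_cases m <;> simp [toReal]

theorem eigenvalue_eigenFive_eq_zero (hM : gram M = ofDist w) :
    w ⬝ᵥ ![1, -1, -1, 1] = 0 := by
  by_contra hne
  have hU : toReal eigenFive * (Mᵀ * M) =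
      (diagonal fun _ => w ⬝ᵥ ![1, -1, -1, 1] : Matrix (Fin 4) (Fin 4) ℝ) * toReal eigenFive := by
    rw [← gram, hM, mul_ofDist toReal_eigenFive_mul_distMat, smul_eq_diagonal_mul]
  have hUU : toReal eigenFive * (toReal eigenFive)ᵀ = diagonal ![4, 12, 24, 40] := by
    rw [← toReal_transpose, ← toReal_mul, eigenFive_mul_transpose]
    rw [toReal, diagonal_map Int.cast_zero]
    congr 1
    ext i
    fin_cases i <;> simp
  have := card_le_of_orthogonal_eigenvectors hU hUU (fun _ => hne)
    (by intro i; fin_cases i <;> norm_num)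
  simp at this

theorem eigenvalue_mul_eigenvalue_neg_eq_zero (hM : gram M = ofDist w) {t : ℝ} (ht : t * t = 5) :
    w ⬝ᵥ ![1, t, -t, -1] * w ⬝ᵥ ![1, -t, t, -1] = 0 := by
  by_contra hne
  obtain ⟨h₁, h₂⟩ := mul_ne_zero_iff.mp hne
  have hnt : -t * -t = 5 := by rw [neg_mul_neg, ht]
  set U := fromRows (coord t) (coord (-t))
  have hU : U * (Mᵀ * M) = (diagonal (Sum.elim (fun _ => w ⬝ᵥ ![1, t, -t, -1])
      (fun _ => w ⬝ᵥ ![1, -t, t, -1])) : Matrix (Fin 3 ⊕ Fin 3) (Fin 3 ⊕ Fin 3) ℝ) * U := by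
    rw [← gram, hM, fromRows_mul, mul_ofDist (coord_mul_distMat ht),
      mul_ofDist (coord_mul_distMat hnt), neg_neg]
    ext (i | i) j <;> simp [U, diagonal_mul]
  have hUU : U * Uᵀ = diagonal (Sum.elim (fun _ => 40 + 8 * t) (fun _ => 40 + 8 * -t)) := by
    have h := coord_mul_transpose_coord_neg hnt
    rw [neg_neg] at h
    rw [transpose_fromRows, fromRows_mul_fromCols, coord_mul_transpose_coord_self ht,
      coord_mul_transpose_coord_self hnt, coord_mul_transpose_coord_neg ht, h, fromBlocks_diagonal]
  have := card_le_of_orthogonal_eigenvectors hU hUU (by rintro (i | i); exacts [h₁, h₂])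
    (by rintro (i | i) <;> simp only [Sum.elim_inl, Sum.elim_inr] <;> intro h <;> nlinarith)
  simp at this

def icoWeights (t : ℝ) : Fin 4 → ℝ := ![(5 + t) / 8, (1 + t) / 8, -((1 + t) / 8), -((5 + t) / 8)]

def icoGram (t : ℝ) : Matrix (Fin 12) (Fin 12) ℝ := ofDist (icoWeights t)

theorem coord₀_coord₁_transpose_mul :
    coord₀ᵀ * coord₀ + (5 : ℤ) • (coord₁ᵀ * coord₁) = ofDist ![10, 2, -2, -10] ∧
      coord₀ᵀ * coord₁ + coord₁ᵀ * coord₀ = ofDist ![2, 2, -2, -2] := by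
  decide

theorem gram_coord {t : ℝ} (ht : t * t = 5) : gram ((4 : ℝ)⁻¹ • coord t) = icoGram t := by
  obtain ⟨h₀, h₁⟩ := coord₀_coord₁_transpose_mul
  have h : (coord t)ᵀ * coord t = toReal (coord₀ᵀ * coord₀ + (5 : ℤ) • (coord₁ᵀ * coord₁)) +
      t • toReal (coord₀ᵀ * coord₁ + coord₁ᵀ * coord₀) := by
    simp only [coord, transpose_add, transpose_smul, ← toReal_transpose, Matrix.add_mul,
      Matrix.mul_add, Matrix.smul_mul, Matrix.mul_smul, ← toReal_mul]
    ext i j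
    simp only [toReal, map_apply, Matrix.add_apply, Matrix.smul_apply, smul_eq_mul]
    push_cast
    linear_combination (((coord₁ᵀ * coord₁) i j : ℤ) : ℝ) * ht
  rw [gram, transpose_smul, Matrix.smul_mul, Matrix.mul_smul, h, h₀, h₁]
  ext i j
  simp only [toReal, ofDist, icoGram, icoWeights, Matrix.smul_apply, Matrix.add_apply, map_apply,
    of_apply]
  obtain ⟨m, hm⟩ : ∃ m, icoDist i j = m := ⟨_, rfl⟩
  rw [hm]
  fin_cases m <;> simp <;> ring

theorem coord₀_coord₁_row_sum : ∀ k, ∑ j, coord₀ k j = 0 ∧ ∑ j, coord₁ k j = 0 := by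
  decide

theorem sum_col_smul_coord (c t : ℝ) : ∑ i, col (c • coord t) i = 0 := by
  ext k
  obtain ⟨h₀, h₁⟩ := coord₀_coord₁_row_sum k
  simp only [col, coord, toReal, WithLp.ofLp_sum, Finset.sum_apply, Matrix.smul_apply,
    Matrix.add_apply, map_apply, smul_eq_mul, Finset.sum_add_distrib, ← Finset.mul_sum,
    PiLp.zero_apply]
  rw [← Int.cast_sum, ← Int.cast_sum, h₀, h₁]
  simp

theorem isIcosahedron_coord {t : ℝ} (ht : t * t = 5) : IsIcosahedron ((4 : ℝ)⁻¹ • coord t) := by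
  have hM := gram_coord ht
  refine ⟨fun i j hij => ?_, sum_col_smul_coord _ _, fun i j hij => ?_⟩
  · have h := norm_col_sub_col_sq hM i j
    rw [hij, sub_self, norm_zero] at h
    obtain ⟨m, hm⟩ : ∃ m, icoDist i j = m := ⟨_, rfl⟩
    rw [hm] at h
    refine eq_of_icoDist_eq_zero i j (hm.trans ?_)
    fin_cases m <;> norm_num [icoWeights] at h ⊢ <;> nlinarith
  · have h := norm_col_sub_col_sq hM i j
    rw [icoDist_eq_one_of_isEdge hij] at h
    refine (pow_left_inj₀ (norm_nonneg _) zero_le_one two_ne_zero).mp ?_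
    rw [h]
    norm_num [icoWeights]
    ring

theorem isGram_icoGram {t : ℝ} (ht : t * t = 5) : IsGram (icoGram t) :=
  ⟨_, isIcosahedron_coord ht, (gram_coord ht).symm⟩

theorem eq_icoWeights_neg {t : ℝ} (ht : t * t = 5) (hedge : 2 * (w 0 - w 1) = 1)
    (hrow : w ⬝ᵥ ![1, 5, 5, 1] = 0) (hfive : w ⬝ᵥ ![1, -1, -1, 1] = 0)
    (hzero : w ⬝ᵥ ![1, t, -t, -1] = 0) : w = icoWeights (-t) := by
  simp [dotProduct, Fin.sum_univ_four] at hrow hfive hzero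
  have h₂ : w 2 = -w 1 := by linarith
  have h₃ : w 3 = -w 0 := by linarith
  have h₁₁ : w 1 * (1 + t) = -1 / 2 := by rw [h₂, h₃] at hzero; linarith
  have h₁ : w 1 = (1 - t) / 8 := by linear_combination (-(1 - t) / 4) * h₁₁ - (w 1 / 4) * ht
  ext m
  fin_cases m <;> simp [icoWeights] <;> linarith

end

theorem eq_icoGram_of_aut_eq {G : Matrix (Fin 12) (Fin 12) ℝ} (hG : IsGram G) (haut : aut G = A) :
    G = icoGram √5 ∨ G = icoGram (-√5) := by
  obtain ⟨M, ⟨-, hsum, hedge⟩, rfl⟩ := hG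
  set w : Fin 4 → ℝ := fun m => gram M 0 (vertexRep m)
  have hM : gram M = ofDist w := eq_ofDist_of_aut_eq haut
  have hs : √5 * √5 = 5 := Real.mul_self_sqrt (by norm_num)
  have hns : -√5 * -√5 = 5 := by rw [neg_mul_neg, hs]
  have hw : 2 * (w 0 - w 1) = 1 := by
    simpa [hedge 0 1 isEdge_zero_one, icoDist] using (norm_col_sub_col_sq hM 0 1).symm
  have hrow : w ⬝ᵥ ![1, 5, 5, 1] = 0 := by
    rw [← sum_ofDist_zero, ← hM]
    exact sum_gram_eq_zero hsum 0
  have hfive := eigenvalue_eigenFive_eq_zero hM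
  rcases mul_eq_zero.mp (eigenvalue_mul_eigenvalue_neg_eq_zero hM hs) with h | h
  · right
    rw [hM, eq_icoWeights_neg hs hw hrow hfive h]
    rfl
  · have hw' := eq_icoWeights_neg hns hw hrow hfive (by rwa [neg_neg])
    rw [neg_neg] at hw'
    left
    rw [hM, hw']
    rfl

/-- Up to equivalence there are exactly 2 Gram matrices of icosahedra whose
automorphism group is all of `A`. -/
theorem count_fully_symmetric_icosahedra :
    ∃ Gs : Fin 2 → Matrix (Fin 12) (Fin 12) ℝ,
      (∀ i, IsGram (Gs i) ∧ aut (Gs i) = (A : Set (Equiv.Perm (Fin 12)))) ∧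
      (∀ i j, i ≠ j → ¬ GramEquiv (Gs i) (Gs j)) ∧
      (∀ G, IsGram G → aut G = (A : Set (Equiv.Perm (Fin 12))) →
        ∃ i, GramEquiv (Gs i) G) := by
  have hs : √5 * √5 = 5 := Real.mul_self_sqrt (by norm_num)
  have hns : -√5 * -√5 = 5 := by rw [neg_mul_neg, hs]
  have hne : icoGram √5 ≠ icoGram (-√5) := fun h => by
    have h₀₀ := congrFun₂ h 0 0
    norm_num [icoGram, ofDist, icoWeights, icoDist] at h₀₀
    linarith [Real.sqrt_pos.2 (show (0 : ℝ) < 5 by norm_num)]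
  set Gs := ![icoGram √5, icoGram (-√5)]
  have hGs : ∀ i, IsGram (Gs i) ∧ aut (Gs i) = A := by
    intro i
    fin_cases i
    exacts [⟨isGram_icoGram hs, aut_ofDist _⟩, ⟨isGram_icoGram hns, aut_ofDist _⟩]
  refine ⟨Gs, hGs, fun i j hij => ?_, fun G hG haut => ?_⟩
  · rw [gramEquiv_iff_eq (hGs i).2]
    fin_cases i <;> fin_cases j <;> simp_all [Gs, eq_comm]
  · rcases eq_icoGram_of_aut_eq hG haut with rfl | rfl
    exacts [⟨0, (gramEquiv_iff_eq (hGs 0).2).2 rfl⟩, ⟨1, (gramEquiv_iff_eq (hGs 1).2).2 rfl⟩]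

end Ico
end
end

section
/- There is no icosahedron M satisfying D·M = M·π(a), where D = diag(−1,1,1). -/
open Matrix

noncomputable section

namespace Ico

/-!
The permutation `a` swaps the vertices `0 ↔ 1` and `2 ↔ 3`, and `{0, 2}`, `{0, 3}` are edges.
If `a` is realised by the reflection `σ` in the plane `x₀ = 0`, then `V₁ = σ V₀` and `V₃ = σ V₂`,
so `‖V₀ - V₂‖ = 1 = ‖V₀ - σ V₂‖`. Expanding, the two squared distances differ by `4 x₀(V₀) x₀(V₂)`,
hence `V₀` or `V₂` lies on the mirror and coincides with its image `V₁` or `V₃`, contradicting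
that the vertices are distinct.
-/

lemma a_mem_A : a ∈ A := Subgroup.subset_closure (by simp)

lemma b_mem_A : b ∈ A := Subgroup.subset_closure (by simp)

lemma c_mem_A : c ∈ A := Subgroup.subset_closure (by simp)

set_option maxRecDepth 40000 in
lemma isEdge_zero_two : IsEdge 0 2 :=
  ⟨a * b * c * a * c, mul_mem (mul_mem (mul_mem (mul_mem a_mem_A b_mem_A) c_mem_A) a_mem_A) c_mem_A,
    by decide⟩

set_option maxRecDepth 40000 in
lemma isEdge_zero_three : IsEdge 0 3 :=
  ⟨c * a * c * b, mul_mem (mul_mem (mul_mem c_mem_A a_mem_A) c_mem_A) b_mem_A, by decide⟩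

lemma mul_permMat_apply {m : Type*} (M : Matrix m (Fin 12) ℝ) (g : Equiv.Perm (Fin 12))
    (k : m) (i : Fin 12) : (M * permMat g) k i = M k (g i) := by
  simp [Matrix.mul_apply, permMat, mul_ite, Finset.sum_ite_eq']

section Reflection

variable {M : Matrix (Fin 3) (Fin 12) ℝ} {g : Equiv.Perm (Fin 12)}
  (hM : diagonal ![(-1 : ℝ), 1, 1] * M = M * permMat g)
include hM

lemma apply_perm_eq_of_diagonal_mul_eq (k : Fin 3) (i : Fin 12) :
    M k (g i) = ![(-1 : ℝ), 1, 1] k * M k i := by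
  rw [← mul_permMat_apply M g, ← hM, diagonal_mul]

lemma col_perm_eq_of_apply_zero_eq_zero {i : Fin 12} (hi : M 0 i = 0) : col M (g i) = col M i := by
  ext k
  fin_cases k <;> simp [col, apply_perm_eq_of_diagonal_mul_eq hM, hi]

lemma mul_eq_zero_of_norm_sub_eq {i j : Fin 12}
    (h : ‖col M i - col M j‖ = ‖col M i - col M (g j)‖) : M 0 i * M 0 j = 0 := by
  have hsq := congrArg (· ^ 2) h
  simp only [EuclideanSpace.norm_sq_eq, Fin.sum_univ_three, col, Real.norm_eq_abs, sq_abs,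
    PiLp.sub_apply, apply_perm_eq_of_diagonal_mul_eq hM, cons_val_zero, cons_val_one,
    cons_val_two, tail_cons, head_cons] at hsq
  linear_combination (-1 / 4 : ℝ) * hsq

end Reflection

/-- There is no icosahedron with `diag(-1,1,1)·M = M·π(a)`. -/
theorem no_icosahedron_a_diag_neg_one_one :
    ¬ ∃ M : Matrix (Fin 3) (Fin 12) ℝ,
        IsIcosahedron M ∧
          Matrix.diagonal ![(-1 : ℝ), 1, 1] * M = M * permMat a := by
  rintro ⟨M, ⟨hinj, -, hedge⟩, hM⟩
  have ha : a 0 = 1 ∧ a 2 = 3 := by decide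
  have hmirror : M 0 0 * M 0 2 = 0 := by
    refine mul_eq_zero_of_norm_sub_eq hM ?_
    rw [ha.2, hedge 0 2 isEdge_zero_two, hedge 0 3 isEdge_zero_three]
  rcases mul_eq_zero.mp hmirror with h0 | h2
  · exact absurd (hinj (col_perm_eq_of_apply_zero_eq_zero hM h0)) (by rw [ha.1]; decide)
  · exact absurd (hinj (col_perm_eq_of_apply_zero_eq_zero hM h2)) (by rw [ha.2]; decide)

end Ico
end
end

section
/- Let M be an icosahedron with columns V₁,…,V₁₂, let i ∈ {1,…,12}, and suppose that all five neighbours of i (i.e. all V_j with {i,j} ∈ E) lie in an affine plane H ⊆ ℝ³ (an affine subspace of dimension 2). Let W be the 3×12 matrix with columns W_j = V_j for j ≠ i and W_i = the orthogonal reflection of V_i across H. Then ‖W_j − W_k‖ = 1 for every {j,k} ∈ E; consequently, if the columns of W are pairwise distinct, then subtracting from each column the centroid (W₁+⋯+W₁₂)/12 yields an icosahedron (the icosahedron obtained by denting at vertex i). -/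
open Matrix

noncomputable section

namespace Ico

/-!
The reflection across `H` is an isometry fixing `H` pointwise, so the reflected vertex keeps
distance `1` to each neighbour of `i`, all of which lie in `H`; no other edge is affected.
Subtracting the centroid is a translation, so it keeps edge lengths and distinctness and makes
the vertices sum to zero.
-/

theorem IsEdge.symm {j k : Fin 12} (h : IsEdge j k) : IsEdge k j := by
  obtain ⟨g, hg, hgjk⟩ := h
  exact ⟨g, hg, by rw [hgjk, Finset.pair_comm]⟩

theorem IsIcosahedron.not_isEdge_self {M : Matrix (Fin 3) (Fin 12) ℝ} (hM : IsIcosahedron M)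
    (i : Fin 12) : ¬ IsEdge i i := fun h => by
  simpa using hM.2.2 i i h

theorem col_of (V : Fin 12 → EuclideanSpace ℝ (Fin 3)) : col (Matrix.of fun r j => V j r) = V :=
  rfl

theorem dist_update_eq_of_dist_eq {ι P : Type*} [DecidableEq ι] [PseudoMetricSpace P]
    {R : ι → ι → Prop} (hR : ∀ {j k}, R j k → R k j) {i : ι} (hi : ¬ R i i) (f : ι → P) {p : P}
    (hp : ∀ j, R i j → dist p (f j) = dist (f i) (f j)) {j k : ι} (hjk : R j k) :
    dist (Function.update f i p j) (Function.update f i p k) = dist (f j) (f k) := by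
  by_cases hj : j = i <;> by_cases hk : k = i
  · subst hj hk; exact absurd hjk hi
  · subst hj; simp only [Function.update_self, Function.update_of_ne hk]; exact hp k hjk
  · subst hk
    simp only [Function.update_self, Function.update_of_ne hj]
    rw [dist_comm, hp j (hR hjk), dist_comm]
  · simp only [Function.update_of_ne hj, Function.update_of_ne hk]

theorem sum_sub_average_eq_zero {ι E : Type*} [Fintype ι] [Nonempty ι] [AddCommGroup E]
    [Module ℝ E] (W : ι → E) :
    ∑ j, (W j - (Fintype.card ι : ℝ)⁻¹ • ∑ l, W l) = 0 := by
  have hcard : (Fintype.card ι : ℝ) ≠ 0 := Nat.cast_ne_zero.mpr Fintype.card_ne_zero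
  rw [Finset.sum_sub_distrib, Finset.sum_const, Finset.card_univ, ← Nat.cast_smul_eq_nsmul ℝ,
    smul_smul, mul_inv_cancel₀ hcard, one_smul, sub_self]

theorem denting_general (M : Matrix (Fin 3) (Fin 12) ℝ) (hM : IsIcosahedron M) (i : Fin 12)
    (H : AffineSubspace ℝ (EuclideanSpace ℝ (Fin 3))) [Nonempty H]
    [Submodule.HasOrthogonalProjection H.direction]
    (hnb : ∀ j, IsEdge i j → col M j ∈ H) :
    ∀ W : Fin 12 → EuclideanSpace ℝ (Fin 3),
      (W = fun j =>
        if j = i then EuclideanGeometry.reflection H (col M i) else col M j) →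
      (∀ j k, IsEdge j k → ‖W j - W k‖ = 1) ∧
      (Function.Injective W →
        IsIcosahedron (Matrix.of fun r j =>
          (W j - (12 : ℝ)⁻¹ • ∑ l, W l) r)) := by
  rintro W rfl
  simp only [← Function.update_apply]
  set p := EuclideanGeometry.reflection H (col M i)
  have hp : ∀ j, IsEdge i j → dist p (col M j) = dist (col M i) (col M j) := fun j hj => by
    rw [dist_comm, EuclideanGeometry.dist_reflection_eq_of_mem H (hnb j hj), dist_comm]
  have hedge : ∀ j k, IsEdge j k →
      ‖Function.update (col M) i p j - Function.update (col M) i p k‖ = 1 := fun j k hjk => by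
    rw [← dist_eq_norm, dist_update_eq_of_dist_eq (R := IsEdge) IsEdge.symm
      (hM.not_isEdge_self i) (col M) hp hjk, dist_eq_norm, hM.2.2 j k hjk]
  refine ⟨hedge, fun hinj => ?_⟩
  refine ⟨?_, ?_, ?_⟩ <;> rw [col_of]
  · exact sub_left_injective.comp hinj
  · rw [show (12 : ℝ) = Fintype.card (Fin 12) by simp]
    exact sum_sub_average_eq_zero _
  · intro j k hjk
    rw [sub_sub_sub_cancel_right]
    exact hedge j k hjk

/-- Denting an icosahedron at a vertex `i` whose five neighbours lie in an affine
plane `H`: reflecting `V_i` across `H` keeps all edge lengths equal to 1, and if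
the new vertices are pairwise distinct then re-centering at the centroid again
yields an icosahedron. -/
theorem denting (M : Matrix (Fin 3) (Fin 12) ℝ) (hM : IsIcosahedron M) (i : Fin 12)
    (H : AffineSubspace ℝ (EuclideanSpace ℝ (Fin 3))) [Nonempty H]
    [Submodule.HasOrthogonalProjection H.direction]
    (hdim : Module.finrank ℝ H.direction = 2)
    (hnb : ∀ j, IsEdge i j → col M j ∈ H) :
    ∀ W : Fin 12 → EuclideanSpace ℝ (Fin 3),
      (W = fun j =>
        if j = i then EuclideanGeometry.reflection H (col M i) else col M j) →
      (∀ j k, IsEdge j k → ‖W j - W k‖ = 1) ∧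
      (Function.Injective W →
        IsIcosahedron (Matrix.of fun r j =>
          (W j - (12 : ℝ)⁻¹ • ∑ l, W l) r)) :=
  denting_general M hM i H hnb

end Ico
end
end
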